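/- Consider a feedforward network with L ≥ 2 layers in which all hidden layers have the same width h, the hidden activation σ is either the hyperbolic tangent tanh or the logistic sigmoid t ↦ 1/(1+e^{−t}), and the last layer output is f_θ(x) = s(a^L) where s(t) = 1/(1+e^{−t}), together with a dataset of m points. Then the BCE empirical risk θ ↦ Σ_{i=1}^m [−y_i log f_θ(x_i) − (1−y_i) log(1 − f_θ(x_i))], as a function of the parameters θ ∈ ℝ^ñ, is a Pfaffian function of format (3(L−2)+5, 1, m((L−1)h+1)+1). -/

import Mathlib

/-!
The risk `F` is the last member of an explicit Pfaffian chain: the hidden units `σ(a^l_j(x_p))`,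
layer by layer over all data points, then the outputs `s(a^L(x_p))`, then `F` itself.
Both activations solve a quadratic ODE (`tanh' = 1 - tanh²`, `s' = s (1 - s)`), so
`∂σ(a^l_j) = q(σ(a^l_j)) ∂a^l_j`, and `∂a^{l+1}_j = Σ_i (∂W_ji) z^l_i + W_ji ∂z^l_i`.
Hence the partials of `a^{l+1}` are polynomials of degree `3l` in `θ` and the earlier units:
each layer costs one degree for the weight and two for `q`. The output units then have degree
`3(L-1) + 2 = 3(L-2) + 5`, and `∂F = Σ_p (s(a^L(x_p)) - y_p) ∂a^L(x_p)` has lower degree.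
-/

open MvPolynomial

noncomputable section

/-- A Pfaffian chain of order `ℓ` and degree `α` on an open set `U ⊆ ℝ^ι`:
real analytic functions whose partial derivatives are polynomials of total degree at most `α`
in the coordinates and the previous chain functions (including itself). -/
def IsPfaffianChain {ι : Type} [Fintype ι] [DecidableEq ι] (ℓ α : ℕ)
    (U : Set (ι → ℝ)) (f : Fin ℓ → (ι → ℝ) → ℝ) : Prop :=
  IsOpen U ∧ 1 ≤ α ∧ (∀ i, AnalyticOnNhd ℝ (f i) U) ∧
    ∀ (i : Fin ℓ) (j : ι), ∃ P : MvPolynomial (ι ⊕ Fin (i.1 + 1)) ℝ, P.totalDegree ≤ α ∧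
      ∀ x ∈ U, fderiv ℝ (f i) x (Pi.single j 1) =
        MvPolynomial.eval (Sum.elim x fun k : Fin (i.1 + 1) => f (Fin.castLE i.isLt k) x) P

/-- `g : ℝ^ι → ℝ` is a Pfaffian function of format `(α, β, ℓ)` on the open set `U`:
it is a polynomial of total degree at most `β` in the coordinates and the functions of a
Pfaffian chain of order `ℓ` and degree `α`. -/
def IsPfaffianWithFormat {ι : Type} [Fintype ι] [DecidableEq ι]
    (U : Set (ι → ℝ)) (g : (ι → ℝ) → ℝ) (α β ℓ : ℕ) : Prop :=
  ∃ f : Fin ℓ → (ι → ℝ) → ℝ, IsPfaffianChain ℓ α U f ∧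
    ∃ Q : MvPolynomial (ι ⊕ Fin ℓ) ℝ, Q.totalDegree ≤ β ∧
      ∀ x ∈ U, g x = MvPolynomial.eval (Sum.elim x fun k => f k x) Q

/-- Index set for the parameters of a feedforward network with `L` layers and widths `n`:
the augmented weight matrix of layer `l+1` (1-based) has shape `n (l+1) × (n l + 1)`,
column `0` being the bias. -/
abbrev ParamIdx (L : ℕ) (n : ℕ → ℕ) : Type :=
  Σ l : Fin L, Fin (n (l.1 + 1)) × Fin (n l.1 + 1)

/-- Entry `(j, i)` of the augmented weight matrix of (1-based) layer `l+1`. -/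
def netWeight {L : ℕ} {n : ℕ → ℕ} (θ : ParamIdx L n → ℝ) (l : ℕ)
    (j : Fin (n (l + 1))) (i : Fin (n l + 1)) : ℝ :=
  if hl : l < L then θ ⟨⟨l, hl⟩, (j, i)⟩ else 0

/-- Augmented layer outputs: `netZ σ θ x l = z^l = (1, σ (a^l))`, with `z^0 = (1, x)`. -/
def netZ {L : ℕ} {n : ℕ → ℕ} (σ : ℝ → ℝ) (θ : ParamIdx L n → ℝ) (x : Fin (n 0) → ℝ) :
    (l : ℕ) → Fin (n l + 1) → ℝ
  | 0 => Fin.cons 1 x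
  | l + 1 => Fin.cons 1 fun j => σ (∑ i, netWeight θ l j i * netZ σ θ x l i)

/-- Preactivations: `netPreact σ θ x l = a^{l+1} = W^{l+1} z^l` (1-based layer `l+1`). -/
def netPreact {L : ℕ} {n : ℕ → ℕ} (σ : ℝ → ℝ) (θ : ParamIdx L n → ℝ) (x : Fin (n 0) → ℝ)
    (l : ℕ) (j : Fin (n (l + 1))) : ℝ :=
  ∑ i, netWeight θ l j i * netZ σ θ x l i

/-- Output of the network with a linear last layer: `a^L` (a scalar, since `n L = 1`). -/
def netOutLin {L : ℕ} {n : ℕ → ℕ} (σ : ℝ → ℝ) (θ : ParamIdx L n → ℝ)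
    (x : Fin (n 0) → ℝ) : ℝ :=
  ∑ j, netPreact σ θ x (L - 1) j

/-- The logistic sigmoid. -/
def logisticFn (t : ℝ) : ℝ := 1 / (1 + Real.exp (-t))

open scoped Polynomial

section PolyIn

variable {ι κ κ' : Type} {f : κ → (ι → ℝ) → ℝ} {d d' : ℕ} {g g₁ g₂ : (ι → ℝ) → ℝ}

def PolyIn (f : κ → (ι → ℝ) → ℝ) (d : ℕ) (g : (ι → ℝ) → ℝ) : Prop :=
  ∃ P : MvPolynomial (ι ⊕ κ) ℝ, P.totalDegree ≤ d ∧
    ∀ x, g x = MvPolynomial.eval (Sum.elim x fun k => f k x) P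

lemma polyIn_const (c : ℝ) : PolyIn f d fun _ => c :=
  ⟨C c, by simp, fun _ => by simp⟩

lemma polyIn_apply (i : ι) : PolyIn f 1 fun x => x i :=
  ⟨X (Sum.inl i), by simp, fun _ => by simp⟩

lemma polyIn_self (k : κ) : PolyIn f 1 (f k) :=
  ⟨X (Sum.inr k), by simp, fun _ => by simp⟩

lemma PolyIn.mono (h : PolyIn f d g) (hd : d ≤ d') : PolyIn f d' g :=
  let ⟨P, hP, he⟩ := h; ⟨P, hP.trans hd, he⟩

lemma PolyIn.add (h₁ : PolyIn f d g₁) (h₂ : PolyIn f d g₂) :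
    PolyIn f d fun x => g₁ x + g₂ x :=
  let ⟨P₁, hP₁, he₁⟩ := h₁
  let ⟨P₂, hP₂, he₂⟩ := h₂
  ⟨P₁ + P₂, (totalDegree_add _ _).trans (max_le hP₁ hP₂), fun x => by simp [he₁, he₂]⟩

lemma PolyIn.mul {d₁ d₂ : ℕ} (h₁ : PolyIn f d₁ g₁) (h₂ : PolyIn f d₂ g₂) :
    PolyIn f (d₁ + d₂) fun x => g₁ x * g₂ x :=
  let ⟨P₁, hP₁, he₁⟩ := h₁
  let ⟨P₂, hP₂, he₂⟩ := h₂
  ⟨P₁ * P₂, (totalDegree_mul _ _).trans (add_le_add hP₁ hP₂), fun x => by simp [he₁, he₂]⟩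

lemma PolyIn.const_mul (c : ℝ) (h : PolyIn f d g) : PolyIn f d fun x => c * g x := by
  simpa using (polyIn_const (d := 0) c).mul h

lemma PolyIn.pow (h : PolyIn f d g) (r : ℕ) : PolyIn f (r * d) fun x => g x ^ r := by
  induction r with
  | zero => simpa using polyIn_const 1
  | succ r ih => simpa [pow_succ, add_mul] using ih.mul h

lemma polyIn_sum {α : Type*} (s : Finset α) {g : α → (ι → ℝ) → ℝ}
    (h : ∀ a ∈ s, PolyIn f d (g a)) : PolyIn f d fun x => ∑ a ∈ s, g a x := by
  classical
  induction s using Finset.induction_on with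
  | empty => simpa using polyIn_const 0
  | insert a s ha ih =>
    simpa [Finset.sum_insert ha] using
      (h a (s.mem_insert_self a)).add (ih fun b hb => h b (Finset.mem_insert_of_mem hb))

lemma PolyIn.polynomial_eval (h : PolyIn f 1 g) (q : ℝ[X]) :
    PolyIn f q.natDegree fun x => q.eval (g x) := by
  simp only [Polynomial.eval_eq_sum_range]
  refine polyIn_sum _ fun r hr => ((h.pow r).const_mul _).mono ?_
  simpa [Nat.lt_succ_iff] using hr

lemma PolyIn.of_range_subset {f' : κ' → (ι → ℝ) → ℝ} (h : PolyIn f d g)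
    (hf : Set.range f ⊆ Set.range f') : PolyIn f' d g := by
  obtain ⟨P, hP, he⟩ := h
  choose e he' using fun k => hf ⟨k, rfl⟩
  refine ⟨MvPolynomial.rename (Sum.map id e) P, (totalDegree_rename_le _ _).trans hP,
    fun x => ?_⟩
  rw [MvPolynomial.eval_rename, he]
  congr 1
  ext (i | k) <;> simp [he']

lemma polyIn_get_of_mem {fs : List ((ι → ℝ) → ℝ)} (hg : g ∈ fs) : PolyIn fs.get 1 g := by
  obtain ⟨k, rfl⟩ := List.mem_iff_get.mp hg
  exact polyIn_self k

end PolyIn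

section PartialDeriv

variable {ι : Type} [DecidableEq ι] {g₁ g₂ u : (ι → ℝ) → ℝ} {k : ι} {x : ι → ℝ}

def partialDeriv (k : ι) (g : (ι → ℝ) → ℝ) (x : ι → ℝ) : ℝ :=
  fderiv ℝ g x (Pi.single k 1)

lemma partialDeriv_const (c : ℝ) : partialDeriv k (fun _ => c) = fun _ => 0 := by
  ext x; simp [partialDeriv]

lemma partialDeriv_apply [Fintype ι] (i : ι) :
    partialDeriv k (fun x => x i) = fun _ => (Pi.single k 1 : ι → ℝ) i := by
  ext x; simp [partialDeriv, fderiv_apply]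

lemma partialDeriv_mul [Fintype ι] (h₁ : DifferentiableAt ℝ g₁ x) (h₂ : DifferentiableAt ℝ g₂ x) :
    partialDeriv k (fun y => g₁ y * g₂ y) x =
      partialDeriv k g₁ x * g₂ x + g₁ x * partialDeriv k g₂ x := by
  simp only [partialDeriv, fderiv_fun_mul h₁ h₂, add_apply,
    smul_apply, smul_eq_mul]
  ring

lemma partialDeriv_sum [Fintype ι] {α : Type*} (s : Finset α) {g : α → (ι → ℝ) → ℝ}
    (h : ∀ a ∈ s, DifferentiableAt ℝ (g a) x) :
    partialDeriv k (fun y => ∑ a ∈ s, g a y) x = ∑ a ∈ s, partialDeriv k (g a) x := by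
  simp [partialDeriv, fderiv_fun_sum h]

lemma partialDeriv_comp [Fintype ι] {φ : ℝ → ℝ} {φ' : ℝ} (hφ : HasDerivAt φ φ' (u x))
    (hu : DifferentiableAt ℝ u x) :
    partialDeriv k (fun y => φ (u y)) x = φ' * partialDeriv k u x := by
  have h := (hφ.comp_hasFDerivAt x hu.hasFDerivAt).fderiv
  rw [Function.comp_def] at h
  simp [partialDeriv, h]

end PartialDeriv

structure PolyInWithPartials {ι κ : Type} [Fintype ι] [DecidableEq ι]
    (f : κ → (ι → ℝ) → ℝ) (d e : ℕ) (g : (ι → ℝ) → ℝ) : Prop where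
  analyticOnNhd : AnalyticOnNhd ℝ g Set.univ
  polyIn : PolyIn f d g
  polyIn_partialDeriv : ∀ k, PolyIn f e (partialDeriv k g)

structure IsPolyODESolution (φ : ℝ → ℝ) (d : ℕ) : Prop where
  analyticAt : ∀ t, AnalyticAt ℝ φ t
  exists_hasDerivAt : ∃ q : ℝ[X], q.natDegree ≤ d ∧ ∀ t, HasDerivAt φ (q.eval (φ t)) t

namespace PolyInWithPartials

variable {ι κ κ' : Type} [Fintype ι] [DecidableEq ι] {f : κ → (ι → ℝ) → ℝ}
  {d d' e e' : ℕ} {g g₁ g₂ u : (ι → ℝ) → ℝ}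

lemma differentiableAt (h : PolyInWithPartials f d e g) (x : ι → ℝ) :
    DifferentiableAt ℝ g x :=
  (h.analyticOnNhd x trivial).differentiableAt

lemma mono (h : PolyInWithPartials f d e g) (hd : d ≤ d') (he : e ≤ e') :
    PolyInWithPartials f d' e' g :=
  ⟨h.analyticOnNhd, h.polyIn.mono hd, fun k => (h.polyIn_partialDeriv k).mono he⟩

lemma of_range_subset {f' : κ' → (ι → ℝ) → ℝ} (h : PolyInWithPartials f d e g)
    (hf : Set.range f ⊆ Set.range f') : PolyInWithPartials f' d e g :=
  ⟨h.analyticOnNhd, h.polyIn.of_range_subset hf,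
    fun k => (h.polyIn_partialDeriv k).of_range_subset hf⟩

lemma const (c : ℝ) : PolyInWithPartials f d e fun _ => c :=
  ⟨fun _ _ => analyticAt_const, polyIn_const c,
    fun k => by rw [partialDeriv_const]; exact polyIn_const 0⟩

lemma apply (i : ι) : PolyInWithPartials f 1 e fun x => x i :=
  ⟨fun _ _ => (ContinuousLinearMap.proj (R := ℝ) (φ := fun _ : ι => ℝ) i).analyticAt _,
    polyIn_apply i, fun k => by rw [partialDeriv_apply]; exact polyIn_const _⟩

lemma mul {d₁ d₂ e₁ e₂ : ℕ} (h₁ : PolyInWithPartials f d₁ e₁ g₁)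
    (h₂ : PolyInWithPartials f d₂ e₂ g₂) :
    PolyInWithPartials f (d₁ + d₂) (max (e₁ + d₂) (d₁ + e₂)) fun x => g₁ x * g₂ x where
  analyticOnNhd x _ := (h₁.analyticOnNhd x trivial).mul (h₂.analyticOnNhd x trivial)
  polyIn := h₁.polyIn.mul h₂.polyIn
  polyIn_partialDeriv k := by
    simpa only [funext fun x => partialDeriv_mul (k := k) (h₁.differentiableAt x)
      (h₂.differentiableAt x)] using
      (((h₁.polyIn_partialDeriv k).mul h₂.polyIn).mono (le_max_left _ _)).add
        ((h₁.polyIn.mul (h₂.polyIn_partialDeriv k)).mono (le_max_right _ _))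

lemma mul_const (h : PolyInWithPartials f d e g) (c : ℝ) :
    PolyInWithPartials f d e fun x => g x * c where
  analyticOnNhd x _ := (h.analyticOnNhd x trivial).mul analyticAt_const
  polyIn := by simpa only [mul_comm] using h.polyIn.const_mul c
  polyIn_partialDeriv k := by
    have hd : partialDeriv k (fun x => g x * c) = fun x => c * partialDeriv k g x := by
      ext x
      rw [partialDeriv_mul (h.differentiableAt x) (differentiableAt_const c), partialDeriv_const]
      ring
    rw [hd]
    exact (h.polyIn_partialDeriv k).const_mul c

lemma sum {α : Type*} (s : Finset α) {g : α → (ι → ℝ) → ℝ}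
    (h : ∀ a ∈ s, PolyInWithPartials f d e (g a)) :
    PolyInWithPartials f d e fun x => ∑ a ∈ s, g a x where
  analyticOnNhd x _ := Finset.analyticAt_fun_sum _ fun a ha => (h a ha).analyticOnNhd x trivial
  polyIn := polyIn_sum s fun a ha => (h a ha).polyIn
  polyIn_partialDeriv k := by
    simpa only [funext fun x => partialDeriv_sum (k := k) s fun a ha => (h a ha).differentiableAt x]
      using polyIn_sum s fun a ha => (h a ha).polyIn_partialDeriv k

lemma polyIn_partialDeriv_comp {φ ψ : ℝ → ℝ} {q : ℝ[X]}
    (hφ : ∀ t, HasDerivAt φ (q.eval (ψ t)) t) (hu : PolyInWithPartials f d e u)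
    (hψ : PolyIn f 1 fun x => ψ (u x)) (k : ι) :
    PolyIn f (q.natDegree + e) (partialDeriv k fun x => φ (u x)) := by
  have hd : partialDeriv k (fun x => φ (u x)) = fun x => q.eval (ψ (u x)) * partialDeriv k u x :=
    funext fun x => partialDeriv_comp (hφ (u x)) (hu.differentiableAt x)
  rw [hd]
  exact (hψ.polynomial_eval q).mul (hu.polyIn_partialDeriv k)

lemma comp {φ : ℝ → ℝ} (hφ : IsPolyODESolution φ d') (hu : PolyInWithPartials f d e u)
    (hφu : PolyIn f 1 fun x => φ (u x)) : PolyInWithPartials f 1 (d' + e) fun x => φ (u x) :=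
  let ⟨_, hq, hφ'⟩ := hφ.exists_hasDerivAt
  ⟨fun x _ => (hφ.analyticAt _).comp (hu.analyticOnNhd x trivial), hφu,
    fun k => (hu.polyIn_partialDeriv_comp hφ' hφu k).mono (by omega)⟩

end PolyInWithPartials

section PfaffianList

variable {ι : Type} [Fintype ι] [DecidableEq ι] {α β : ℕ} {fs gs : List ((ι → ℝ) → ℝ)}

def PfaffianList (α : ℕ) (fs : List ((ι → ℝ) → ℝ)) : Prop :=
  ∀ i (hi : i < fs.length), PolyInWithPartials (fs.take (i + 1)).get 1 α fs[i]

lemma pfaffianList_nil : PfaffianList α ([] : List ((ι → ℝ) → ℝ)) :=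
  fun _ hi => absurd hi (Nat.not_lt_zero _)

lemma PfaffianList.mono {α' : ℕ} (h : PfaffianList α fs) (hα : α ≤ α') : PfaffianList α' fs :=
  fun i hi => (h i hi).mono le_rfl hα

lemma PfaffianList.append (hfs : PfaffianList α fs)
    (hgs : ∀ g ∈ gs, PolyInWithPartials (fs ++ [g]).get 1 α g) : PfaffianList α (fs ++ gs) := by
  intro i hi
  rcases lt_or_ge i fs.length with hi' | hi'
  · rw [List.getElem_append_left hi', List.take_append_of_le_length hi']
    exact hfs i hi'
  · obtain ⟨r, rfl⟩ := Nat.exists_eq_add_of_le hi'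
    rw [List.getElem_append_right hi']
    refine (hgs _ (List.getElem_mem _)).of_range_subset ?_
    have hr : r < gs.length := by rw [List.length_append] at hi; omega
    rw [List.take_append, List.take_of_length_le (by omega),
      show fs.length + r + 1 - fs.length = r + 1 by omega]
    intro a ha
    simp only [Set.range_list_get, Set.mem_ofPred_eq, List.mem_append, List.mem_singleton] at ha ⊢
    rcases ha with ha | rfl
    · exact Or.inl ha
    · exact Or.inr (List.mem_iff_getElem.mpr ⟨r, by rw [List.length_take]; omega, by simp⟩)

lemma PfaffianList.isPfaffianWithFormat (hfs : PfaffianList α fs) (hα : 1 ≤ α) {g : (ι → ℝ) → ℝ}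
    (hg : PolyIn fs.get β g) : IsPfaffianWithFormat Set.univ g α β fs.length := by
  refine ⟨fs.get, ⟨isOpen_univ, hα, fun i => (hfs i i.2).analyticOnNhd, fun i j => ?_⟩,
    hg.imp fun Q hQ => ⟨hQ.1, fun x _ => hQ.2 x⟩⟩
  have hsub : Set.range (fs.take (i + 1)).get ⊆
      Set.range fun k : Fin (i + 1) => fs.get (Fin.castLE i.isLt k) := by
    rintro _ ⟨k, rfl⟩
    exact ⟨⟨k, by simpa using k.2⟩, by simp⟩
  obtain ⟨P, hP, he⟩ := ((hfs i i.2).polyIn_partialDeriv j).of_range_subset hsub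
  exact ⟨P, hP, fun x _ => he x⟩

end PfaffianList

lemma logisticFn_eq_sigmoid : logisticFn = Real.sigmoid :=
  funext fun t => by rw [logisticFn, Real.sigmoid_def, one_div]

lemma hasDerivAt_tanh (t : ℝ) : HasDerivAt Real.tanh (1 - Real.tanh t ^ 2) t := by
  rw [show Real.tanh = Real.sinh / Real.cosh from funext Real.tanh_eq_sinh_div_cosh]
  refine ((Real.hasDerivAt_sinh t).div (Real.hasDerivAt_cosh t)
    (Real.cosh_pos t).ne').congr_deriv ?_
  simp only [Pi.div_apply]
  field_simp

lemma isPolyODESolution_tanh : IsPolyODESolution Real.tanh 2 where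
  analyticAt t := by
    rw [show Real.tanh = fun s => Real.sinh s / Real.cosh s from funext Real.tanh_eq_sinh_div_cosh]
    fun_prop (disch := exact (Real.cosh_pos t).ne')
  exists_hasDerivAt := ⟨1 - Polynomial.X ^ 2, by compute_degree!, fun t => by
    simpa using hasDerivAt_tanh t⟩

lemma isPolyODESolution_logisticFn : IsPolyODESolution logisticFn 2 where
  analyticAt _ := logisticFn_eq_sigmoid ▸ analyticAt_sigmoid
  exists_hasDerivAt := ⟨Polynomial.X * (1 - Polynomial.X), by compute_degree!, fun t => by
    simpa [logisticFn_eq_sigmoid] using Real.hasDerivAt_sigmoid t⟩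

def bceLoss (y t : ℝ) : ℝ :=
  -y * Real.log (logisticFn t) - (1 - y) * Real.log (1 - logisticFn t)

lemma hasDerivAt_bceLoss (y t : ℝ) : HasDerivAt (bceLoss y) (logisticFn t - y) t := by
  have hs := Real.hasDerivAt_sigmoid t
  have hpos : Real.sigmoid t ≠ 0 := (Real.sigmoid_pos t).ne'
  have hlt : 1 - Real.sigmoid t ≠ 0 := (sub_pos.mpr (Real.sigmoid_lt_one t)).ne'
  unfold bceLoss
  rw [logisticFn_eq_sigmoid]
  refine (((hs.log hpos).const_mul (-y)).sub
    ((hs.const_sub 1).log hlt |>.const_mul (1 - y))).congr_deriv ?_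
  field_simp
  ring

lemma analyticAt_bceLoss (y t : ℝ) : AnalyticAt ℝ (bceLoss y) t := by
  have hs : AnalyticAt ℝ Real.sigmoid t := analyticAt_sigmoid
  unfold bceLoss
  rw [logisticFn_eq_sigmoid]
  exact (analyticAt_const.mul (hs.log (Real.sigmoid_pos t))).sub (analyticAt_const.mul
    ((analyticAt_const.sub hs).log (sub_pos.mpr (Real.sigmoid_lt_one t))))

section Network

variable {L : ℕ} {n : ℕ → ℕ} {σ : ℝ → ℝ} {κ : Type} {f : κ → (ParamIdx L n → ℝ) → ℝ}
  {d e : ℕ} {cx : Fin (n 0) → ℝ}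

def hiddenUnit (σ : ℝ → ℝ) (cx : Fin (n 0) → ℝ) (l : ℕ) (j : Fin (n (l + 1)))
    (θ : ParamIdx L n → ℝ) : ℝ :=
  σ (netPreact σ θ cx l j)

def outUnit (σ : ℝ → ℝ) (cx : Fin (n 0) → ℝ) (θ : ParamIdx L n → ℝ) : ℝ :=
  logisticFn (netOutLin σ θ cx)

def bceRisk {m : ℕ} (σ : ℝ → ℝ) (x : Fin m → Fin (n 0) → ℝ) (y : Fin m → ℝ)
    (θ : ParamIdx L n → ℝ) : ℝ :=
  ∑ p, bceLoss (y p) (netOutLin σ θ (x p))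

lemma netZ_succ_succ (θ : ParamIdx L n → ℝ) (l : ℕ) (j : Fin (n (l + 1))) :
    netZ σ θ cx (l + 1) j.succ = hiddenUnit σ cx l j θ := by
  simp [netZ, hiddenUnit, netPreact]

lemma polyInWithPartials_netWeight (l : ℕ) (j : Fin (n (l + 1))) (i : Fin (n l + 1)) :
    PolyInWithPartials f 1 e fun θ => netWeight θ l j i := by
  by_cases hl : l < L
  · simpa only [netWeight, dif_pos hl] using PolyInWithPartials.apply _
  · simpa only [netWeight, dif_neg hl] using PolyInWithPartials.const 0

lemma polyInWithPartials_netZ_succ (hσ : IsPolyODESolution σ 2) {l : ℕ}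
    (hpre : ∀ j, PolyInWithPartials f d e fun θ => netPreact σ θ cx l j)
    (hunits : ∀ j, PolyIn f 1 (hiddenUnit σ cx l j)) (i : Fin (n (l + 1) + 1)) :
    PolyInWithPartials f 1 (2 + e) fun θ => netZ σ θ cx (l + 1) i := by
  cases i using Fin.cases with
  | zero => exact .const 1
  | succ j =>
    simp only [netZ_succ_succ]
    exact (hpre j).comp hσ (hunits j)

lemma polyInWithPartials_netPreact (hσ : IsPolyODESolution σ 2) (l : ℕ)
    (hunits : ∀ l' < l, ∀ j, PolyIn f 1 (hiddenUnit σ cx l' j)) (j : Fin (n (l + 1))) :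
    PolyInWithPartials f 2 (3 * l) fun θ => netPreact σ θ cx l j := by
  induction l with
  | zero =>
    -- `z⁰ = (1, x)` does not depend on `θ`, so `a¹` is linear in `θ`.
    exact .sum _ fun i _ => ((polyInWithPartials_netWeight (e := 0) 0 j i).mul_const
      ((Fin.cons 1 cx : Fin (n 0 + 1) → ℝ) i)).mono (by norm_num) le_rfl
  | succ l ih =>
    have hz := polyInWithPartials_netZ_succ hσ (fun j => ih (fun l' hl' => hunits l' (by omega)) j)
      (hunits l (by omega))
    exact .sum _ fun i _ => ((polyInWithPartials_netWeight (e := 0) _ j i).mul (hz i)).mono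
      le_rfl (max_le (by omega) (by omega))

lemma polyInWithPartials_netOutLin (hσ : IsPolyODESolution σ 2)
    (hunits : ∀ l' < L - 1, ∀ j, PolyIn f 1 (hiddenUnit σ cx l' j)) :
    PolyInWithPartials f 2 (3 * (L - 1)) fun θ => netOutLin σ θ cx :=
  .sum _ fun j _ => polyInWithPartials_netPreact hσ (L - 1) hunits j

end Network

section Chain

variable {L : ℕ} {n : ℕ → ℕ} {σ : ℝ → ℝ} {m : ℕ} {x : Fin m → Fin (n 0) → ℝ} {y : Fin m → ℝ}

lemma polyInWithPartials_bceRisk {κ : Type} {f : κ → (ParamIdx L n → ℝ) → ℝ}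
    (hσ : IsPolyODESolution σ 2)
    (hunits : ∀ p, ∀ l' < L - 1, ∀ j, PolyIn f 1 (hiddenUnit σ (x p) l' j))
    (houts : ∀ p, PolyIn f 1 (outUnit σ (x p))) (hrisk : PolyIn f 1 (bceRisk σ x y)) :
    PolyInWithPartials f 1 (1 + 3 * (L - 1)) (bceRisk σ x y) := by
  have hout p := polyInWithPartials_netOutLin hσ (hunits p)
  have hloss p t : HasDerivAt (bceLoss (y p)) ((Polynomial.X - Polynomial.C (y p)).eval
      (logisticFn t)) t := by
    simpa using hasDerivAt_bceLoss (y p) t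
  refine ⟨fun θ _ => Finset.analyticAt_fun_sum _ fun p _ =>
    (analyticAt_bceLoss _ _).comp ((hout p).analyticOnNhd θ trivial), hrisk, fun k => ?_⟩
  have hd : partialDeriv k (bceRisk σ x y) =
      fun θ => ∑ p, partialDeriv k (fun θ => bceLoss (y p) (netOutLin σ θ (x p))) θ :=
    funext fun θ => partialDeriv_sum _ fun p _ =>
      (hloss p _).differentiableAt.comp θ ((hout p).differentiableAt θ)
  rw [hd]
  exact polyIn_sum _ fun p _ => ((hout p).polyIn_partialDeriv_comp (hloss p) (houts p) k).mono
    (by rw [Polynomial.natDegree_X_sub_C])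

variable (L σ x) in
def hiddenLayer (l : ℕ) : List ((ParamIdx L n → ℝ) → ℝ) :=
  (List.finRange m).flatMap fun p => List.ofFn (hiddenUnit σ (x p) l)

-- Ordered by layer, so that every unit comes after the units feeding into it.
variable (L σ x) in
def hiddenUnits (l : ℕ) : List ((ParamIdx L n → ℝ) → ℝ) :=
  (List.range l).flatMap (hiddenLayer L σ x)

variable (L σ x y) in
def bceChain : List ((ParamIdx L n → ℝ) → ℝ) :=
  hiddenUnits L σ x (L - 1) ++ List.ofFn (fun p => outUnit σ (x p)) ++ [bceRisk σ x y]

lemma mem_hiddenUnits {l l' : ℕ} (hl : l' < l) (p : Fin m) (j : Fin (n (l' + 1))) :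
    hiddenUnit σ (x p) l' j ∈ hiddenUnits L σ x l := by
  simp only [hiddenUnits, hiddenLayer, List.mem_flatMap, List.mem_range, List.mem_finRange,
    List.mem_ofFn]
  exact ⟨l', hl, p, trivial, j, rfl⟩

lemma pfaffianList_hiddenUnits (hσ : IsPolyODESolution σ 2) (l : ℕ) :
    PfaffianList (3 * l) (hiddenUnits L σ x l) := by
  induction l with
  | zero => exact pfaffianList_nil
  | succ l ih =>
    rw [hiddenUnits, List.range_succ, List.flatMap_append, List.flatMap_singleton]
    refine (ih.mono (by omega)).append fun g hg => ?_
    obtain ⟨p, -, j, rfl⟩ : ∃ p, p ∈ List.finRange m ∧ ∃ j, hiddenUnit σ (x p) l j = g := by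
      simpa [hiddenLayer] using hg
    have hunits : ∀ l' < l, ∀ j', PolyIn (hiddenUnits L σ x l ++ [hiddenUnit σ (x p) l j]).get 1
        (hiddenUnit σ (x p) l' j') := fun l' hl' j' =>
      polyIn_get_of_mem (List.mem_append_left _ (mem_hiddenUnits hl' p j'))
    exact ((polyInWithPartials_netPreact hσ l hunits j).comp hσ
      (polyIn_get_of_mem (List.mem_append_right _ (List.mem_singleton_self _)))).mono le_rfl
      (by omega)

lemma pfaffianList_bceChain (hσ : IsPolyODESolution σ 2) :
    PfaffianList (3 * (L - 2) + 5) (bceChain L σ x y) := by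
  have hunits {fs : List ((ParamIdx L n → ℝ) → ℝ)} (hfs : hiddenUnits L σ x (L - 1) ⊆ fs) p l'
      (hl' : l' < L - 1) j : PolyIn fs.get 1 (hiddenUnit σ (x p) l' j) :=
    polyIn_get_of_mem (hfs (mem_hiddenUnits hl' p j))
  refine (((pfaffianList_hiddenUnits hσ (L - 1)).mono (by omega)).append fun g hg => ?_).append
    fun g hg => ?_
  · obtain ⟨p, rfl⟩ := List.mem_ofFn.mp hg
    exact ((polyInWithPartials_netOutLin hσ (hunits (List.subset_append_left _ _) p)).comp
      isPolyODESolution_logisticFn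
      (polyIn_get_of_mem (List.mem_append_right _ (List.mem_singleton_self _)))).mono le_rfl
      (by omega)
  · obtain rfl := List.mem_singleton.mp hg
    exact (polyInWithPartials_bceRisk hσ
      (hunits fun _ ha => List.mem_append_left _ (List.mem_append_left _ ha))
      (fun p => polyIn_get_of_mem (by simp))
      (polyIn_get_of_mem (List.mem_append_right _ (List.mem_singleton_self _)))).mono le_rfl
      (by omega)

lemma length_bceChain {h : ℕ} (hhid : ∀ l : ℕ, 1 ≤ l → l ≤ L - 1 → n l = h) :
    (bceChain L σ x y).length = m * ((L - 1) * h + 1) + 1 := by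
  have hlayer : ∀ l ∈ List.range (L - 1), (hiddenLayer L σ x l).length = m * h := by
    intro l hl
    rw [List.mem_range] at hl
    simp [hiddenLayer, List.length_flatMap, hhid (l + 1) (by omega) (by omega)]
  simp only [bceChain, hiddenUnits, List.length_append, List.length_flatMap,
    List.map_congr_left hlayer, List.map_const', List.length_range, List.sum_replicate,
    smul_eq_mul, List.length_ofFn, List.length_singleton]
  ring

end Chain

theorem statement6_general (L : ℕ) (h : ℕ) (n : ℕ → ℕ)
    (hhid : ∀ l : ℕ, 1 ≤ l → l ≤ L - 1 → n l = h)
    (σ : ℝ → ℝ) (hσ : σ = Real.tanh ∨ σ = logisticFn)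
    (m : ℕ) (x : Fin m → Fin (n 0) → ℝ) (y : Fin m → ℝ) :
    IsPfaffianWithFormat (ι := ParamIdx L n) Set.univ
      (fun θ => ∑ p, (-(y p) * Real.log (logisticFn (netOutLin σ θ (x p))) -
        (1 - y p) * Real.log (1 - logisticFn (netOutLin σ θ (x p)))))
      (3 * (L - 2) + 5) 1 (m * ((L - 1) * h + 1) + 1) := by
  have hσ' : IsPolyODESolution σ 2 := by
    rcases hσ with rfl | rfl
    exacts [isPolyODESolution_tanh, isPolyODESolution_logisticFn]
  rw [← length_bceChain (σ := σ) (x := x) (y := y) hhid]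
  exact (pfaffianList_bceChain hσ').isPfaffianWithFormat (by omega)
    (polyIn_get_of_mem (List.mem_append_right _ (List.mem_singleton_self _)))

/-- For a feedforward network with `L ≥ 2` layers, all hidden layers of
width `h`, hidden activation `tanh` or the logistic sigmoid, and last-layer output
`s(a^L)` with `s` the logistic sigmoid, the BCE empirical risk on a dataset of `m` points
is a Pfaffian function of the parameters of format `(3(L−2)+5, 1, m((L−1)h+1)+1)`. -/
theorem statement6 (L : ℕ) (hL : 2 ≤ L) (h : ℕ) (n : ℕ → ℕ)
    (hhid : ∀ l : ℕ, 1 ≤ l → l ≤ L - 1 → n l = h) (hout : n L = 1)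
    (σ : ℝ → ℝ) (hσ : σ = Real.tanh ∨ σ = logisticFn)
    (m : ℕ) (x : Fin m → Fin (n 0) → ℝ) (y : Fin m → ℝ) :
    IsPfaffianWithFormat (ι := ParamIdx L n) Set.univ
      (fun θ => ∑ p, (-(y p) * Real.log (logisticFn (netOutLin σ θ (x p))) -
        (1 - y p) * Real.log (1 - logisticFn (netOutLin σ θ (x p)))))
      (3 * (L - 2) + 5) 1 (m * ((L - 1) * h + 1) + 1) :=
  statement6_general L h n hhid σ hσ m x y
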